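/- Let X be a Banach lattice, n ∈ ℕ, and x = (x₁,...,xₙ) ∈ Xⁿ. If τ_{n,x} : H_n → X is the Krivine functional calculus operator (the unique linear, finite-suprema-preserving map with τ_{n,x}(π_{n,j}) = x_j), then for every h ∈ H_n one has τ_{n,x}(h) ≤ ‖h‖_{H_n} · max_{1≤j≤n} |x_j| in the order of X, and consequently ‖τ_{n,x}(h)‖_X ≤ ‖h‖_{H_n} · ‖max_{1≤j≤n} |x_j|‖_X. -/

import Mathlib

open Filter Topology

/-- `h : ℝⁿ → ℝ` is positively homogeneous of degree 1. -/
def PosHomog {n : ℕ} (h : (Fin n → ℝ) → ℝ) : Prop :=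
  ∀ l : ℝ, 0 ≤ l → ∀ t, h (l • t) = l * h t

/-- Membership in `H_n`: continuous and positively homogeneous of degree 1. -/
def InHn {n : ℕ} (h : (Fin n → ℝ) → ℝ) : Prop := Continuous h ∧ PosHomog h

/-- The norm of `H_n`: supremum of `|h|` over the unit sphere of the sup norm on `ℝⁿ`. -/
noncomputable def HnNorm {n : ℕ} (h : (Fin n → ℝ) → ℝ) : ℝ :=
  ⨆ t : {t : Fin n → ℝ // ‖t‖ = 1}, |h t.1|

/-- `τ` is the Krivine functional calculus operator associated to `x ∈ Xⁿ`:
a linear map on `H_n` preserving finite suprema sending the `j`-th coordinate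
projection to `x j`. -/
def IsKrivine {X : Type*} [NormedAddCommGroup X] [Lattice X] [HasSolidNorm X]
    [IsOrderedAddMonoid X] [NormedSpace ℝ X]
    {n : ℕ} (x : Fin n → X) (τ : ((Fin n → ℝ) → ℝ) → X) : Prop :=
  (∀ h g, InHn h → InHn g → τ (h + g) = τ h + τ g) ∧
  (∀ (c : ℝ) h, InHn h → τ (c • h) = c • τ h) ∧
  (∀ h g, InHn h → InHn g → τ (h ⊔ g) = τ h ⊔ τ g) ∧
  (∀ j, τ (fun t => t j) = x j)

/-! Every `h ∈ H_n` satisfies `h ≤ ‖h‖_{H_n} · ‖·‖_∞` pointwise, and `‖·‖_∞ = max_j |π_{n,j}|`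
is a finite supremum of the `|π_{n,j}| = π_{n,j} ∨ -π_{n,j}`, so `τ` sends it to `max_j |x_j|`.
Since `τ` preserves suprema it is monotone, whence `±τ h ≤ ‖h‖_{H_n} • max_j |x_j|`;
the norm bound then follows from solidity of the norm. -/

theorem pi_norm_eq_sup'_abs {ι : Type*} [Fintype ι] (hs : (Finset.univ : Finset ι).Nonempty)
    (t : ι → ℝ) : ‖t‖ = Finset.univ.sup' hs fun j => |t j| := by
  obtain ⟨j₀, -⟩ := hs
  apply le_antisymm
  · refine (pi_norm_le_iff_of_nonneg ((abs_nonneg (t j₀)).trans ?_)).2 fun j => ?_ <;>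
      exact Finset.le_sup' (fun j => |t j|) (Finset.mem_univ _)
  · exact Finset.sup'_le _ _ fun j _ => norm_le_pi_norm t j

theorem norm_le_norm_of_abs_le {X : Type*} [NormedAddCommGroup X] [Lattice X] [HasSolidNorm X]
    [IsOrderedAddMonoid X] {a b : X} (h : |a| ≤ b) : ‖a‖ ≤ ‖b‖ :=
  norm_le_norm_of_abs_le_abs (h.trans_eq (abs_of_nonneg ((abs_nonneg a).trans h)).symm)

section Hn

variable {n : ℕ} {f g : (Fin n → ℝ) → ℝ}

theorem PosHomog.map_zero (hf : PosHomog f) : f 0 = 0 := by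
  simpa using hf 0 le_rfl 0

theorem InHn.smul (c : ℝ) (hf : InHn f) : InHn (c • f) := by
  refine ⟨hf.1.const_smul c, fun l hl t => ?_⟩
  simp only [Pi.smul_apply, smul_eq_mul, hf.2 l hl t]
  ring

theorem InHn.neg (hf : InHn f) : InHn (-f) := by
  simpa using hf.smul (-1)

theorem InHn.sup (hf : InHn f) (hg : InHn g) : InHn (f ⊔ g) := by
  refine ⟨hf.1.sup hg.1, fun l hl t => ?_⟩
  simp only [Pi.sup_apply, hf.2 l hl t, hg.2 l hl t]
  exact (mul_max_of_nonneg _ _ hl).symm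

theorem inHn_finset_sup' {ι : Type*} {s : Finset ι} (hs : s.Nonempty)
    {F : ι → (Fin n → ℝ) → ℝ} (hF : ∀ i ∈ s, InHn (F i)) : InHn (s.sup' hs F) := by
  induction hs using Finset.Nonempty.cons_induction with
  | singleton a => simpa using hF a
  | cons a s ha hs ih =>
    rw [Finset.sup'_cons hs]
    simp only [Finset.mem_cons, forall_eq_or_imp] at hF
    exact hF.1.sup (ih hF.2)

theorem inHn_eval (j : Fin n) : InHn fun t : Fin n → ℝ => t j :=
  ⟨continuous_apply j, fun _ _ _ => rfl⟩

theorem inHn_norm : InHn fun t : Fin n → ℝ => ‖t‖ :=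
  ⟨continuous_norm, fun _ hl t => norm_smul_of_nonneg hl t⟩

theorem HnNorm_nonneg (f : (Fin n → ℝ) → ℝ) : 0 ≤ HnNorm f :=
  Real.iSup_nonneg fun _ => abs_nonneg _

theorem HnNorm_neg (f : (Fin n → ℝ) → ℝ) : HnNorm (-f) = HnNorm f := by
  simp only [HnNorm, Pi.neg_apply, abs_neg]

theorem abs_le_HnNorm (hf : Continuous f) {t : Fin n → ℝ} (ht : ‖t‖ = 1) :
    |f t| ≤ HnNorm f := by
  have hbdd : BddAbove (Set.range fun u : {u : Fin n → ℝ // ‖u‖ = 1} => |f u.1|) := by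
    obtain ⟨C, hC⟩ := ((isCompact_sphere (0 : Fin n → ℝ) 1).image hf.abs).bddAbove
    refine ⟨C, ?_⟩
    rintro _ ⟨u, rfl⟩
    exact hC ⟨u.1, by simpa using u.2, rfl⟩
  exact le_ciSup hbdd ⟨t, ht⟩

theorem InHn.le_HnNorm_mul_norm (hf : InHn f) (t : Fin n → ℝ) : f t ≤ HnNorm f * ‖t‖ := by
  rcases eq_or_ne t 0 with rfl | ht
  · simp [hf.2.map_zero]
  have hnt : 0 < ‖t‖ := norm_pos_iff.2 ht
  have hunit : ‖‖t‖⁻¹ • t‖ = 1 := by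
    rw [norm_smul, norm_inv, norm_norm, inv_mul_cancel₀ hnt.ne']
  calc f t = ‖t‖ * f (‖t‖⁻¹ • t) := by rw [← hf.2 _ hnt.le, smul_inv_smul₀ hnt.ne']
    _ ≤ ‖t‖ * HnNorm f := by
      gcongr
      exact (le_abs_self _).trans (abs_le_HnNorm hf.1 hunit)
    _ = HnNorm f * ‖t‖ := mul_comm _ _

end Hn

namespace IsKrivine

variable {X : Type*} [NormedAddCommGroup X] [Lattice X] [HasSolidNorm X] [IsOrderedAddMonoid X]
  [NormedSpace ℝ X] {n : ℕ} {x : Fin n → X} {τ : ((Fin n → ℝ) → ℝ) → X} {f g : (Fin n → ℝ) → ℝ}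

theorem map_neg (hτ : IsKrivine x τ) (hf : InHn f) : τ (-f) = -τ f := by
  rw [← neg_one_smul ℝ f, hτ.2.1 _ _ hf, neg_one_smul]

theorem mono (hτ : IsKrivine x τ) (hf : InHn f) (hg : InHn g) (hfg : f ≤ g) : τ f ≤ τ g := by
  rw [← sup_eq_right.2 hfg, hτ.2.2.1 _ _ hf hg]
  exact le_sup_left

theorem map_abs_eval (hτ : IsKrivine x τ) (j : Fin n) : τ (fun t => |t j|) = |x j| := by
  have habs : (fun t : Fin n → ℝ => |t j|) = (fun t => t j) ⊔ -(fun t => t j) := rfl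
  rw [habs, hτ.2.2.1 _ _ (inHn_eval j) (inHn_eval j).neg, hτ.map_neg (inHn_eval j), hτ.2.2.2]
  rfl

theorem map_finset_sup' (hτ : IsKrivine x τ) {ι : Type*} {s : Finset ι} (hs : s.Nonempty)
    {F : ι → (Fin n → ℝ) → ℝ} (hF : ∀ i ∈ s, InHn (F i)) :
    τ (s.sup' hs F) = s.sup' hs fun i => τ (F i) := by
  induction hs using Finset.Nonempty.cons_induction with
  | singleton a => simp
  | cons a s ha hs ih =>
    simp only [Finset.mem_cons, forall_eq_or_imp] at hF
    rw [Finset.sup'_cons hs, Finset.sup'_cons hs,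
      hτ.2.2.1 _ _ hF.1 (inHn_finset_sup' hs hF.2), ih hF.2]

theorem map_norm (hτ : IsKrivine x τ) (hs : (Finset.univ : Finset (Fin n)).Nonempty) :
    τ (fun t => ‖t‖) = Finset.univ.sup' hs fun j => |x j| := by
  have hnorm : (fun t : Fin n → ℝ => ‖t‖) = Finset.univ.sup' hs fun j t => |t j| := by
    funext t
    rw [pi_norm_eq_sup'_abs hs, Finset.sup'_apply]
  have hF : ∀ j ∈ Finset.univ, InHn fun t : Fin n → ℝ => |t j| := fun j _ =>
    (inHn_eval j).sup (inHn_eval j).neg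
  simp only [hnorm, hτ.map_finset_sup' hs hF, hτ.map_abs_eval]

theorem le_HnNorm_smul_map_norm (hτ : IsKrivine x τ) (hf : InHn f) :
    τ f ≤ HnNorm f • τ (fun t => ‖t‖) := by
  rw [← hτ.2.1 _ _ inHn_norm]
  exact hτ.mono hf (inHn_norm.smul _) hf.le_HnNorm_mul_norm

theorem abs_le_HnNorm_smul_map_norm (hτ : IsKrivine x τ) (hf : InHn f) :
    |τ f| ≤ HnNorm f • τ (fun t => ‖t‖) := by
  refine abs_le'.2 ⟨hτ.le_HnNorm_smul_map_norm hf, ?_⟩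
  rw [← hτ.map_neg hf, ← HnNorm_neg f]
  exact hτ.le_HnNorm_smul_map_norm hf.neg

end IsKrivine

/-- For the Krivine functional calculus operator `τ` of `x ∈ Xⁿ` and every `h ∈ H_n`,
`τ h ≤ ‖h‖_{H_n} • max_j |x j|` in the order of `X`, and consequently
`‖τ h‖ ≤ ‖h‖_{H_n} * ‖max_j |x j|‖`. -/
theorem krivine_le_HnNorm_smul_max {X : Type*} [NormedAddCommGroup X] [Lattice X] [HasSolidNorm X]
    [IsOrderedAddMonoid X]
    [NormedSpace ℝ X] {n : ℕ} (hn : 0 < n) (x : Fin n → X)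
    (τ : ((Fin n → ℝ) → ℝ) → X) (hτ : IsKrivine x τ)
    (h : (Fin n → ℝ) → ℝ) (hh : InHn h) :
    τ h ≤ HnNorm h • (Finset.univ.sup' ⟨⟨0, hn⟩, Finset.mem_univ _⟩ fun j => |x j|) ∧
    ‖τ h‖ ≤ HnNorm h * ‖Finset.univ.sup' ⟨⟨0, hn⟩, Finset.mem_univ _⟩ fun j => |x j|‖ := by
  have habs := hτ.abs_le_HnNorm_smul_map_norm hh
  rw [hτ.map_norm ⟨⟨0, hn⟩, Finset.mem_univ _⟩] at habs
  refine ⟨(le_abs_self _).trans habs, ?_⟩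
  calc ‖τ h‖ ≤ ‖HnNorm h • Finset.univ.sup' _ fun j => |x j|‖ := norm_le_norm_of_abs_le habs
    _ = HnNorm h * ‖Finset.univ.sup' _ fun j => |x j|‖ := by
      rw [norm_smul, Real.norm_of_nonneg (HnNorm_nonneg h)]
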